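/- arXiv:2404.16295 — 3 statements merged into one kernel-verified Lean document; each statement's English description precedes it below -/
import Mathlib

section
/- Let (Ω, 𝒜, P) be a probability space, G ⊆ 𝒜 a sub-σ-algebra, t ∈ ℝ, τ̄ > 0, a ∈ ℝ, m ∈ ℝ with m ≠ 0. Let U₀ : Ω → ℝ be G-measurable and integrable, and let u : [t, t+τ̄] × Ω → ℝ be jointly measurable with ∫_{t}^{t+τ̄} ∫_Ω |u(s,ω)| dP(ω) ds < ∞. Suppose that for every s ∈ [t, t+τ̄], E[u_s | G] = (U₀ + a/m)·e^{m(s − t)} − a/m almost surely. Then, almost surely, E[ ∫_t^{t+τ̄} u_s ds | G ] = τ̄·( U₀·𝓜(m, τ̄) + (a/m)·(𝓜(m, τ̄) − 1) ). (The conditional-expectation computation at the heart of Proposition 4.3, which yields that the squared VIX is an affine function of the spot activity rate: VIX_t² = a'·u_t + b' with a' = 2(Ψ(−i) − E[J₁])𝓜(m_u, τ̄).) -/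
open MeasureTheory
open scoped MeasureTheory

/-- `𝓜(x, τ) = (e^{xτ} − 1)/(xτ)`. -/
noncomputable def Mcal (x τ : ℝ) : ℝ := (Real.exp (x * τ) - 1) / (x * τ)

/-- The conditional-expectation computation at the heart of Proposition 4.3: if
`E[u_s | G] = (U₀ + a/m) e^{m(s − t)} − a/m` a.s. for every `s ∈ [t, t + τ̄]`, then
`E[∫_t^{t+τ̄} u_s ds | G] = τ̄ (U₀ 𝓜(m, τ̄) + (a/m)(𝓜(m, τ̄) − 1))` a.s. -/
theorem condexp_integral_affine_activity_rate
    {Ω : Type*} (mG : MeasurableSpace Ω) {mΩ : MeasurableSpace Ω} (hG : mG ≤ mΩ)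
    (P : Measure Ω) [IsProbabilityMeasure P]
    (t τbar a m : ℝ) (hτ : 0 < τbar) (hm : m ≠ 0)
    (U₀ : Ω → ℝ) (hU₀meas : StronglyMeasurable[mG] U₀) (hU₀int : Integrable U₀ P)
    (u : ℝ → Ω → ℝ)
    (hu_int : IntegrableOn (fun p : ℝ × Ω => u p.1 p.2)
      (Set.Icc t (t + τbar) ×ˢ Set.univ) (MeasureTheory.volume.prod P))
    (hcond : ∀ s ∈ Set.Icc t (t + τbar),
      P[u s|mG] =ᵐ[P] fun ω => (U₀ ω + a / m) * Real.exp (m * (s - t)) - a / m) :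
    P[(fun ω => ∫ s in t..(t + τbar), u s ω)|mG]
      =ᵐ[P] fun ω => τbar * (U₀ ω * Mcal m τbar + (a / m) * (Mcal m τbar - 1)) := by
  have htt : t ≤ t + τbar := by linarith
  set I : Set ℝ := Set.Ioc t (t + τbar) with hI
  set M : ℝ := Mcal m τbar with hMdef
  -- integrability over the restricted product measure
  have hu_int' : Integrable (fun p : ℝ × Ω => u p.1 p.2)
      ((volume.restrict I).prod P) := by
    have h := hu_int.mono_set
      (Set.prod_mono Set.Ioc_subset_Icc_self (subset_refl Set.univ))
    rw [IntegrableOn, ← Measure.prod_restrict, Measure.restrict_univ] at h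
    exact h
  have hF_eq : ∀ ω : Ω, (∫ s in t..(t + τbar), u s ω) = ∫ s in I, u s ω :=
    fun ω => intervalIntegral.integral_of_le htt
  have hFint : Integrable (fun ω => ∫ s in t..(t + τbar), u s ω) P := by
    have h := hu_int'.swap.integral_prod_left
    simpa only [hF_eq, Function.comp_apply, Prod.swap] using h
  refine (ae_eq_condExp_of_forall_setIntegral_eq hG hFint ?_ ?_ ?_).symm
  · intro A _ _
    exact (((hU₀int.mul_const M).add (integrable_const _)).const_mul τbar).integrableOn
  · -- set integral equality
    intro A hA hAfin
    have hA' : MeasurableSet A := hG A hA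
    set PA : ℝ := (P A).toReal with hPA
    set C₁ : ℝ := (∫ ω in A, U₀ ω ∂P) + (a / m) * PA with hC₁
    set C₂ : ℝ := (a / m) * PA with hC₂
    set E : ℝ := m⁻¹ * (Real.exp (m * τbar) - 1) with hE
    -- integrability over (P.restrict A).prod (volume.restrict I)
    have h1 : Integrable (fun p : ℝ × Ω => u p.1 p.2)
        ((volume.restrict I).prod (P.restrict A)) := by
      have h := hu_int'.restrict (s := Set.univ ×ˢ A)
      rwa [← Measure.prod_restrict, Measure.restrict_univ] at h
    have h2 : Integrable (fun p : Ω × ℝ => u p.2 p.1)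
        ((P.restrict A).prod (volume.restrict I)) := h1.swap
    -- a.e. pointwise-in-s computation of the inner conditional integral
    have hae_int : ∀ᵐ s ∂(volume.restrict I), Integrable (u s) P := by
      have := hu_int'.prod_right_ae
      filter_upwards [this] with s hs using hs
    have hmem : ∀ᵐ s ∂(volume.restrict I), s ∈ I := ae_restrict_mem measurableSet_Ioc
    have step3 : (fun s => ∫ ω in A, u s ω ∂P)
        =ᵐ[volume.restrict I] fun s => Real.exp (m * (s - t)) * C₁ - C₂ := by
      filter_upwards [hae_int, hmem] with s hs hsI
      have hsIcc : s ∈ Set.Icc t (t + τbar) := Set.Ioc_subset_Icc_self hsI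
      have hce := setIntegral_condExp hG hs hA
      rw [← hce, setIntegral_congr_ae hA' ((hcond s hsIcc).mono fun ω h _ => h)]
      have hint1 : Integrable (fun ω => (U₀ ω + a / m) * Real.exp (m * (s - t)))
          (P.restrict A) :=
        ((hU₀int.add (integrable_const _)).mul_const _).restrict
      rw [integral_sub hint1 (integrable_const _), integral_const, integral_mul_const,
        integral_add hU₀int.restrict (integrable_const _), integral_const]
      simp only [measureReal_restrict_apply_univ, measureReal_def, Measure.restrict_apply_univ, smul_eq_mul, ← hPA]
      rw [hC₁, hC₂]; ring
    -- compute ∫ s in I, exp (m * (s - t)) ds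
    have hexp : (∫ s in I, Real.exp (m * (s - t))) = E := by
      rw [hI, ← intervalIntegral.integral_of_le htt]
      have h3 : (∫ s in t..(t + τbar), Real.exp (m * (s - t)))
          = ∫ x in (0:ℝ)..τbar, Real.exp (m * x) := by
        have := intervalIntegral.integral_comp_sub_right
          (a := t) (b := t + τbar) (fun x => Real.exp (m * x)) t
        simpa using this
      rw [h3]
      have h4 := intervalIntegral.integral_comp_mul_left (a := (0:ℝ)) (b := τbar)
        (fun x => Real.exp x) hm
      rw [h4]
      simp [integral_exp, hE, smul_eq_mul]
    have step4 : (∫ s in I, (Real.exp (m * (s - t)) * C₁ - C₂))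
        = E * C₁ - τbar * C₂ := by
      have hi1 : IntegrableOn (fun s => Real.exp (m * (s - t)) * C₁) I volume := by
        rw [hI]
        exact ((Real.continuous_exp.comp (by fun_prop)).mul continuous_const).integrableOn_Ioc
      have hi2 : IntegrableOn (fun _ : ℝ => C₂) I volume :=
        integrableOn_const (by rw [hI]; exact measure_Ioc_lt_top.ne)
      have hvol : (volume I).toReal = τbar := by
        rw [hI, Real.volume_Ioc, show t + τbar - t = τbar by ring]
        exact ENNReal.toReal_ofReal hτ.le
      rw [integral_sub hi1 hi2, integral_mul_const, hexp, integral_const,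
        measureReal_restrict_apply_univ, measureReal_def, hvol, smul_eq_mul]
    have step6 : (∫ ω in A, τbar * (U₀ ω * M + (a / m) * (M - 1)) ∂P)
        = E * C₁ - τbar * C₂ := by
      rw [integral_const_mul, integral_add (hU₀int.restrict.mul_const M) (integrable_const _),
        integral_mul_const, integral_const, measureReal_restrict_apply_univ, measureReal_def, smul_eq_mul, ← hPA,
        hC₁, hC₂, hE, hMdef]
      unfold Mcal
      field_simp
      ring
    calc (∫ ω in A, τbar * (U₀ ω * M + (a / m) * (M - 1)) ∂P)
        = E * C₁ - τbar * C₂ := step6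
      _ = ∫ s in I, (Real.exp (m * (s - t)) * C₁ - C₂) := step4.symm
      _ = ∫ s in I, (∫ ω in A, u s ω ∂P) := (integral_congr_ae step3).symm
      _ = ∫ ω in A, (∫ s in I, u s ω) ∂P := (integral_integral_swap h2).symm
      _ = ∫ ω in A, (∫ s in t..(t + τbar), u s ω) ∂P :=
          integral_congr_ae (Filter.Eventually.of_forall fun ω => (hF_eq ω).symm)
  · refine StronglyMeasurable.aestronglyMeasurable ?_
    exact stronglyMeasurable_const.mul
      ((hU₀meas.mul stronglyMeasurable_const).add stronglyMeasurable_const)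
end

section
/- Let (Ω, 𝒜, P) be a probability space, let L : [0, ∞) × Ω → ℝ be jointly measurable with right-continuous sample paths s ↦ L(s, ω), and let T : Ω → [0, ∞) be measurable. Let m ∈ ℝ and ψ ∈ ℂ be such that E[exp(i·m·L_s)] = exp(s·ψ) for every s ≥ 0 (note that then Re ψ ≤ 0, so s ↦ exp(s·ψ) is bounded on [0,∞)). Assume the σ-algebra generated by T is independent of the σ-algebra generated by the family (L_s)_{s ≥ 0}. Then E[exp(i·m·L(T(ω), ω))] = E[exp(T·ψ)]. (The fundamental formula of time-changed Lévy models: for a time change independent of the base process, the characteristic function of X_t = L_{T_t} is φ_X(m;t) = φ_T(−iΨ_L(m); t).) -/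
open MeasureTheory ProbabilityTheory Complex
open scoped NNReal

lemma aux_integral_complex_split {Ω : Type*} [MeasurableSpace Ω] {μ : Measure Ω} {X : Ω → ℂ}
    (hXi : Integrable X μ) :
    ∫ ω, X ω ∂μ
      = ((∫ ω, (X ω).re ∂μ : ℝ) : ℂ) + ((∫ ω, (X ω).im ∂μ : ℝ) : ℂ) * Complex.I := by
  have hre_int : Integrable (fun ω => ((X ω).re : ℂ)) μ :=
    Complex.ofRealCLM.integrable_comp hXi.re
  have him_int : Integrable (fun ω => ((X ω).im : ℂ)) μ :=
    Complex.ofRealCLM.integrable_comp hXi.im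
  have hre_int' : Integrable (fun ω => (X ω).re) μ := hXi.re
  have him_int' : Integrable (fun ω => (X ω).im) μ := hXi.im
  have hre : ∫ ω, ((X ω).re : ℂ) ∂μ = ((∫ ω, (X ω).re ∂μ : ℝ) : ℂ) := by
    have := ContinuousLinearMap.integral_comp_comm Complex.ofRealCLM hre_int'
    simpa using this
  have him : ∫ ω, ((X ω).im : ℂ) ∂μ = ((∫ ω, (X ω).im ∂μ : ℝ) : ℂ) := by
    have := ContinuousLinearMap.integral_comp_comm Complex.ofRealCLM him_int'
    simpa using this
  calc ∫ ω, X ω ∂μ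
      = ∫ ω, (((X ω).re : ℂ) + ((X ω).im : ℂ) * Complex.I) ∂μ := by
        simp [Complex.re_add_im]
    _ = (∫ ω, ((X ω).re : ℂ) ∂μ) + ∫ ω, ((X ω).im : ℂ) * Complex.I ∂μ :=
        integral_add hre_int (him_int.mul_const Complex.I)
    _ = ((∫ ω, (X ω).re ∂μ : ℝ) : ℂ) + ((∫ ω, (X ω).im ∂μ : ℝ) : ℂ) * Complex.I := by
        rw [integral_mul_const, hre, him]

/-- If `A` is measurable w.r.t. a σ-algebra independent of `m2` and `X` is `m2`-measurable
and integrable, then `∫_A X = P(A) • ∫ X`. -/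
lemma aux_setIntegral_indep {Ω : Type*} {m1 m2 : MeasurableSpace Ω} [m0 : MeasurableSpace Ω]
    (P : Measure Ω) [IsProbabilityMeasure P]
    (hindep : Indep m1 m2 P)
    {A : Set Ω} (hA : MeasurableSet[m1] A) (hA0 : MeasurableSet A)
    {X : Ω → ℂ} (hX : Measurable[m2] X) (hXi : Integrable X P) :
    ∫ ω in A, X ω ∂P = (P A).toReal • ∫ ω, X ω ∂P := by
  have h_mul : ∀ (Y : Ω → ℝ), Measurable[m2] Y → Integrable Y P →
      ∫ ω in A, Y ω ∂P = (P A).toReal * ∫ ω, Y ω ∂P := by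
    intro Y hY hYi
    have hrA1 : Measurable[m1] (A.indicator (fun _ => (1:ℝ))) :=
      measurable_const.indicator hA
    have hIF : IndepFun (A.indicator (fun _ => (1:ℝ))) Y P :=
      indep_of_indep_of_le_left (indep_of_indep_of_le_right hindep hY.comap_le) hrA1.comap_le
    have hrAi : Integrable (A.indicator fun _ => (1:ℝ)) P :=
      (integrable_const (1:ℝ)).indicator hA0
    have hmul := hIF.integral_mul_eq_mul_integral hrAi.aestronglyMeasurable hYi.aestronglyMeasurable
    have h1 : ∫ ω, (A.indicator fun _ => (1:ℝ)) ω ∂P = (P A).toReal := by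
      rw [integral_indicator_const (1:ℝ) hA0]; simp [Measure.real]
    have h2 : (A.indicator (fun _ => (1:ℝ)) * Y) = A.indicator Y := by
      funext ω
      by_cases h : ω ∈ A <;> simp [Set.indicator_of_mem, Set.indicator_of_notMem, h]
    rw [h2, integral_indicator hA0, h1] at hmul
    rw [hmul]
  have hre := h_mul (fun ω => (X ω).re) (Complex.measurable_re.comp hX) hXi.re
  have him := h_mul (fun ω => (X ω).im) (Complex.measurable_im.comp hX) hXi.im
  have hsplitA := aux_integral_complex_split (hXi.restrict (s := A))
  have hsplit := aux_integral_complex_split hXi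
  rw [hsplitA, hsplit, hre, him, Complex.real_smul]
  push_cast
  ring

/-- The fundamental formula of time-changed Lévy models: if `E[exp(i m L_s)] = exp(s ψ)` for
all `s ≥ 0` and the time change `T` is independent of the base process `L`, then the
characteristic function of the time-changed process satisfies
`E[exp(i m L_T)] = E[exp(T ψ)]`, i.e. `φ_X(m; t) = φ_T(−iΨ_L(m); t)`. -/
theorem charFun_time_changed_levy_independent
    {Ω : Type*} [MeasurableSpace Ω] (P : Measure Ω) [IsProbabilityMeasure P]
    (L : ℝ≥0 → Ω → ℝ)
    (hLmeas : Measurable (Function.uncurry L))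
    (hLrc : ∀ (ω : Ω) (t : ℝ≥0), ContinuousWithinAt (fun s => L s ω) (Set.Ici t) t)
    (T : Ω → ℝ≥0) (hT : Measurable T)
    (m : ℝ) (ψ : ℂ)
    (hchar : ∀ s : ℝ≥0,
      ∫ ω, Complex.exp (I * m * L s ω) ∂P = Complex.exp ((s : ℝ) * ψ))
    (hindep : Indep (MeasurableSpace.comap T inferInstance)
      (⨆ s : ℝ≥0, MeasurableSpace.comap (L s) inferInstance) P) :
    ∫ ω, Complex.exp (I * m * L (T ω) ω) ∂P
      = ∫ ω, Complex.exp ((T ω : ℝ) * ψ) ∂P := by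
  classical
  -- basic norm facts
  have hnorm1 : ∀ x : ℝ, ‖Complex.exp (I * m * x)‖ = 1 := by
    intro x
    rw [Complex.norm_exp]
    simp [Complex.mul_re]
  -- Re ψ ≤ 0
  have hψ : ψ.re ≤ 0 := by
    have h1 := hchar 1
    have hle : ‖∫ ω, Complex.exp (I * m * L 1 ω) ∂P‖ ≤ 1 := by
      calc ‖∫ ω, Complex.exp (I * m * L 1 ω) ∂P‖
          ≤ ∫ ω, ‖Complex.exp (I * m * L 1 ω)‖ ∂P := norm_integral_le_integral_norm _
        _ = 1 := by simp [hnorm1]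
    rw [h1] at hle
    rw [Complex.norm_exp] at hle
    have : (((1:ℝ≥0) : ℝ) * ψ).re = ψ.re := by simp
    rw [this] at hle
    exact Real.exp_le_one_iff.mp hle
  have hbound : ∀ t : ℝ≥0, ‖Complex.exp ((t : ℝ) * ψ)‖ ≤ 1 := by
    intro t
    rw [Complex.norm_exp]
    apply Real.exp_le_one_iff.mpr
    have : (((t:ℝ) : ℂ) * ψ).re = (t:ℝ) * ψ.re := by simp
    rw [this]
    exact mul_nonpos_of_nonneg_of_nonpos t.coe_nonneg hψ
  -- measurability of the process
  have hLs_meas : ∀ s : ℝ≥0, Measurable (L s) := fun s =>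
    hLmeas.comp (measurable_prodMk_left)
  have hX_meas : ∀ s : ℝ≥0, Measurable[⨆ s : ℝ≥0, MeasurableSpace.comap (L s) inferInstance]
      (fun ω => Complex.exp (I * m * L s ω)) := by
    intro s
    have h1 : Measurable[⨆ s : ℝ≥0, MeasurableSpace.comap (L s) inferInstance] (L s) :=
      Measurable.of_comap_le (le_iSup (fun s : ℝ≥0 => MeasurableSpace.comap (L s) inferInstance) s)
    exact Measurable.cexp ((Complex.measurable_ofReal.comp h1).const_mul (I * m))
  have hmL_le : (⨆ s : ℝ≥0, MeasurableSpace.comap (L s) inferInstance)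
      ≤ ‹MeasurableSpace Ω› := iSup_le fun s => (hLs_meas s).comap_le
  -- key independence computation
  have key : ∀ (B : Set ℝ≥0), MeasurableSet B → ∀ s : ℝ≥0,
      ∫ ω in T ⁻¹' B, Complex.exp (I * m * L s ω) ∂P
        = (P (T ⁻¹' B)).toReal • Complex.exp ((s : ℝ) * ψ) := by
    intro B hB s
    have hXi : Integrable (fun ω => Complex.exp (I * m * L s ω)) P := by
      refine (integrable_const (1:ℝ)).mono' ?_ ?_
      · exact ((hX_meas s).mono hmL_le le_rfl).aestronglyMeasurable
      · exact Filter.Eventually.of_forall fun ω => le_of_eq (hnorm1 _)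
    rw [aux_setIntegral_indep P hindep ⟨B, hB, rfl⟩ (hT hB) (hX_meas s) hXi, hchar s]
  -- dyadic approximation from above
  set J : ℕ → ℝ≥0 → ℕ := fun n x => ⌈x * 2 ^ n⌉₊ with hJ
  set c : ℕ → ℕ → ℝ≥0 := fun n k => (k : ℝ≥0) / 2 ^ n with hc
  set S : ℕ → Ω → ℝ≥0 := fun n ω => c n (J n (T ω)) with hS
  have h2n : ∀ n : ℕ, ((2:ℝ≥0) ^ n) ≠ 0 := fun n => pow_ne_zero n two_ne_zero
  have hx_le : ∀ (n : ℕ) (x : ℝ≥0), x ≤ c n (J n x) := by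
    intro n x
    rw [hc]
    rw [le_div_iff₀ (pos_iff_ne_zero.mpr (h2n n))]
    exact Nat.le_ceil _
  have h_ub : ∀ (n : ℕ) (x : ℝ≥0), c n (J n x) ≤ x + ((2:ℝ≥0) ^ n)⁻¹ := by
    intro n x
    rw [hc, div_le_iff₀ (pos_iff_ne_zero.mpr (h2n n))]
    calc ((⌈x * 2 ^ n⌉₊ : ℝ≥0)) ≤ x * 2 ^ n + 1 := le_of_lt (Nat.ceil_lt_add_one (by positivity))
      _ = (x + ((2:ℝ≥0) ^ n)⁻¹) * 2 ^ n := by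
          rw [add_mul, inv_mul_cancel₀ (h2n n)]
  have hS_tendsto : ∀ ω, Filter.Tendsto (fun n => S n ω) Filter.atTop
      (nhdsWithin (T ω) (Set.Ici (T ω))) := by
    intro ω
    have hup : Filter.Tendsto (fun n : ℕ => T ω + ((2:ℝ≥0) ^ n)⁻¹) Filter.atTop (nhds (T ω)) := by
      have h0 : Filter.Tendsto (fun n : ℕ => ((2:ℝ≥0) ^ n)⁻¹) Filter.atTop (nhds 0) := by
        have := NNReal.tendsto_pow_atTop_nhds_zero_of_lt_one
          (by rw [← NNReal.coe_lt_coe]; push_cast; norm_num : (2:ℝ≥0)⁻¹ < 1)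
        simpa [inv_pow] using this
      simpa using Filter.Tendsto.add (tendsto_const_nhds (x := T ω)) h0
    have h1 : Filter.Tendsto (fun n => S n ω) Filter.atTop (nhds (T ω)) :=
      tendsto_of_tendsto_of_tendsto_of_le_of_le tendsto_const_nhds hup
        (fun n => hx_le n (T ω)) (fun n => h_ub n (T ω))
    exact tendsto_nhdsWithin_of_tendsto_nhds_of_eventually_within _ h1
      (Filter.Eventually.of_forall fun n => hx_le n (T ω))
  have hJ_meas : ∀ n, Measurable (J n) := by
    intro n
    exact Nat.measurable_ceil.comp (measurable_id.mul_const _)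
  have hS_meas : ∀ n, Measurable (S n) := by
    intro n
    exact (measurable_from_top (f := fun k : ℕ => c n k)).comp ((hJ_meas n).comp hT)
  -- integrands
  set gL : ℕ → Ω → ℂ := fun n ω => Complex.exp (I * m * L (S n ω) ω) with hgL
  set gR : ℕ → Ω → ℂ := fun n ω => Complex.exp ((S n ω : ℝ) * ψ) with hgR
  have hgL_meas : ∀ n, Measurable (gL n) := by
    intro n
    have : Measurable (fun ω => L (S n ω) ω) :=
      hLmeas.comp ((hS_meas n).prodMk measurable_id)
    exact Measurable.cexp ((Complex.measurable_ofReal.comp this).const_mul (I * m))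
  have hgR_meas : ∀ n, Measurable (gR n) := by
    intro n
    have : Measurable (fun ω => ((S n ω : ℝ) : ℂ)) :=
      Complex.measurable_ofReal.comp (measurable_coe_nnreal_real.comp (hS_meas n))
    exact Measurable.cexp (this.mul_const ψ)
  have hgL_int : ∀ n, Integrable (gL n) P := by
    intro n
    refine (integrable_const (1:ℝ)).mono' (hgL_meas n).aestronglyMeasurable ?_
    exact Filter.Eventually.of_forall fun ω => le_of_eq (hnorm1 _)
  have hgR_int : ∀ n, Integrable (gR n) P := by
    intro n
    refine (integrable_const (1:ℝ)).mono' (hgR_meas n).aestronglyMeasurable ?_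
    exact Filter.Eventually.of_forall fun ω => hbound _
  -- key step : for each n the two integrals agree
  have step : ∀ n, ∫ ω, gL n ω ∂P = ∫ ω, gR n ω ∂P := by
    intro n
    have hBmeas : ∀ k : ℕ, MeasurableSet ((J n) ⁻¹' {k}) := fun k => hJ_meas n (measurableSet_singleton k)
    have hAmeas : ∀ k : ℕ, MeasurableSet (T ⁻¹' ((J n) ⁻¹' {k})) := fun k => hT (hBmeas k)
    have hpart : (⋃ k : ℕ, T ⁻¹' ((J n) ⁻¹' {k})) = Set.univ := by
      ext ω; simp
    have hdisj : Pairwise (Function.onFun Disjoint fun k : ℕ => T ⁻¹' ((J n) ⁻¹' {k})) := by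
      intro i j hij
      simp only [Function.onFun, Set.disjoint_left]
      intro ω hi hj
      exact hij (hi.symm.trans hj)
    have hLsum : ∫ ω, gL n ω ∂P = ∑' k : ℕ, ∫ ω in T ⁻¹' ((J n) ⁻¹' {k}), gL n ω ∂P := by
      rw [← setIntegral_univ, ← hpart, integral_iUnion hAmeas hdisj
        ((hgL_int n).integrableOn)]
    have hRsum : ∫ ω, gR n ω ∂P = ∑' k : ℕ, ∫ ω in T ⁻¹' ((J n) ⁻¹' {k}), gR n ω ∂P := by
      rw [← setIntegral_univ, ← hpart, integral_iUnion hAmeas hdisj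
        ((hgR_int n).integrableOn)]
    rw [hLsum, hRsum]
    congr 1
    funext k
    have hSconst : ∀ ω ∈ T ⁻¹' ((J n) ⁻¹' {k}), S n ω = c n k := by
      intro ω hω
      simp only [Set.mem_preimage, Set.mem_singleton_iff] at hω
      rw [hS]
      simp only [hω]
    have hLk : ∫ ω in T ⁻¹' ((J n) ⁻¹' {k}), gL n ω ∂P
        = ∫ ω in T ⁻¹' ((J n) ⁻¹' {k}), Complex.exp (I * m * L (c n k) ω) ∂P := by
      apply setIntegral_congr_fun (hAmeas k)
      intro ω hω
      rw [hgL]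
      simp only [hSconst ω hω]
    have hRk : ∫ ω in T ⁻¹' ((J n) ⁻¹' {k}), gR n ω ∂P
        = ∫ ω in T ⁻¹' ((J n) ⁻¹' {k}), Complex.exp ((c n k : ℝ) * ψ) ∂P := by
      apply setIntegral_congr_fun (hAmeas k)
      intro ω hω
      rw [hgR]
      simp only [hSconst ω hω]
    rw [hLk, hRk, key _ (hBmeas k) (c n k), setIntegral_const, Measure.real]
  -- pass to the limit
  have limL : Filter.Tendsto (fun n => ∫ ω, gL n ω ∂P) Filter.atTop
      (nhds (∫ ω, Complex.exp (I * m * L (T ω) ω) ∂P)) := by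
    apply tendsto_integral_of_dominated_convergence (fun _ => (1:ℝ))
      (fun n => (hgL_meas n).aestronglyMeasurable) (integrable_const 1)
    · exact fun n => Filter.Eventually.of_forall fun ω => le_of_eq (hnorm1 _)
    · apply Filter.Eventually.of_forall
      intro ω
      have h1 : Filter.Tendsto (fun n => L (S n ω) ω) Filter.atTop (nhds (L (T ω) ω)) :=
        ((hLrc ω (T ω)).tendsto).comp (hS_tendsto ω)
      have hc : Continuous fun x : ℝ => Complex.exp (I * m * x) :=
        Complex.continuous_exp.comp ((continuous_const.mul Complex.continuous_ofReal))
      exact (hc.tendsto _).comp h1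
  have limR : Filter.Tendsto (fun n => ∫ ω, gR n ω ∂P) Filter.atTop
      (nhds (∫ ω, Complex.exp ((T ω : ℝ) * ψ) ∂P)) := by
    apply tendsto_integral_of_dominated_convergence (fun _ => (1:ℝ))
      (fun n => (hgR_meas n).aestronglyMeasurable) (integrable_const 1)
    · exact fun n => Filter.Eventually.of_forall fun ω => hbound _
    · apply Filter.Eventually.of_forall
      intro ω
      have h1 : Filter.Tendsto (fun n => S n ω) Filter.atTop (nhds (T ω)) :=
        (hS_tendsto ω).mono_right nhdsWithin_le_nhds
      have hc : Continuous fun t : ℝ≥0 => Complex.exp ((t : ℝ) * ψ) :=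
        Complex.continuous_exp.comp
          ((Complex.continuous_ofReal.comp NNReal.continuous_coe).mul continuous_const)
      exact (hc.tendsto _).comp h1
  have limL' : Filter.Tendsto (fun n => ∫ ω, gR n ω ∂P) Filter.atTop
      (nhds (∫ ω, Complex.exp (I * m * L (T ω) ω) ∂P)) := by
    simpa only [step] using limL
  exact tendsto_nhds_unique limL' limR
end

section
/- Let (Ω, 𝒜, P) be a probability space. Let L : [0, ∞) × Ω → ℝ and U : [0, ∞) × Ω → [0, ∞) be jointly measurable processes with right-continuous sample paths, and let V : Ω → [0, ∞) be measurable. Let m ∈ ℝ and ψ ∈ ℂ be such that E[exp(i·m·L_s)] = exp(s·ψ) for every s ≥ 0 (so Re ψ ≤ 0). Assume the three σ-algebras generated by the family (L_s)_{s≥0}, by the family (U_s)_{s≥0}, and by V are jointly independent. Define g : [0, ∞) → ℂ by g(r) := E[exp(ψ·U_r)]. Then E[ exp( i·m·L( U(V(ω), ω), ω ) ) ] = E[ g(V) ]. (Theorem 3.2(ii) in the independent case: the characteristic function of the composite time-changed process X = L_{U_V} equals the expectation over V of the generalized Laplace transform of U, φ_X(m;t) = E[φ_U(−iΨ_L(m);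 V_t)].) -/
open MeasureTheory ProbabilityTheory Complex Filter
open scoped NNReal Topology

section Aux

variable {Ω : Type*} [mΩ : MeasurableSpace Ω] {P : Measure Ω} [IsProbabilityMeasure P]

/-- Dyadic upper approximation converges from the right. -/
lemma aux_dyadic_tendsto (x : ℝ≥0) :
    Tendsto (fun n : ℕ => ((⌈(2 ^ n : ℝ≥0) * x⌉₊ : ℝ≥0) / 2 ^ n)) atTop
      (nhdsWithin x (Set.Ici x)) := by
  have h2 : ∀ n : ℕ, (0 : ℝ≥0) < 2 ^ n := fun n => pow_pos (by norm_num) n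
  have hle : ∀ n : ℕ, x ≤ (⌈(2 ^ n : ℝ≥0) * x⌉₊ : ℝ≥0) / 2 ^ n := by
    intro n
    rw [le_div_iff₀ (h2 n), mul_comm]
    exact Nat.le_ceil _
  have hub : ∀ n : ℕ, (⌈(2 ^ n : ℝ≥0) * x⌉₊ : ℝ≥0) / 2 ^ n ≤ x + ((2 : ℝ≥0) ^ n)⁻¹ := by
    intro n
    rw [div_le_iff₀ (h2 n)]
    calc (⌈(2 ^ n : ℝ≥0) * x⌉₊ : ℝ≥0) ≤ (2 ^ n : ℝ≥0) * x + 1 :=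
          le_of_lt (Nat.ceil_lt_add_one zero_le)
    _ = (x + ((2 : ℝ≥0) ^ n)⁻¹) * 2 ^ n := by
        rw [add_mul, inv_mul_cancel₀ (h2 n).ne', mul_comm]
  have h0 : Tendsto (fun n : ℕ => ((2 : ℝ≥0) ^ n)⁻¹) atTop (nhds 0) := by
    simp only [← inv_pow]
    exact NNReal.tendsto_pow_atTop_nhds_zero_of_lt_one
      (by rw [← NNReal.coe_lt_coe]; norm_num)
  have hlim : Tendsto (fun n : ℕ => x + ((2 : ℝ≥0) ^ n)⁻¹) atTop (nhds x) := by
    simpa using tendsto_const_nhds.add h0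
  have htend : Tendsto (fun n : ℕ => ((⌈(2 ^ n : ℝ≥0) * x⌉₊ : ℝ≥0) / 2 ^ n)) atTop (nhds x) :=
    tendsto_of_tendsto_of_tendsto_of_le_of_le tendsto_const_nhds hlim hle hub
  exact tendsto_nhdsWithin_iff.mpr ⟨htend, Eventually.of_forall hle⟩

/-- Integral of an indicator times an independent bounded function. -/
lemma aux_indic {m₁ m₂ : MeasurableSpace Ω} (h₁ : m₁ ≤ mΩ) (h₂ : m₂ ≤ mΩ)
    (hi : Indep m₁ m₂ P) {B : Set Ω} (hB : MeasurableSet[m₂] B)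
    {g : Ω → ℂ} (hg : Measurable[m₁] g) (hbd : ∀ ω, ‖g ω‖ ≤ 1) :
    ∫ ω, B.indicator g ω ∂P = (P B).toReal • ∫ ω, g ω ∂P := by
  letI instΩ : MeasurableSpace Ω := mΩ
  have hgm : Measurable[mΩ] g := hg.mono h₁ le_rfl
  have hBm : MeasurableSet[mΩ] B := h₂ _ hB
  have hgint : Integrable g P :=
    (integrable_const (1 : ℝ)).mono' hgm.aestronglyMeasurable (Eventually.of_forall hbd)
  have hint : Integrable (B.indicator g) P := hgint.indicator hBm
  set X : Ω → ℝ := B.indicator (fun _ => 1) with hX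
  have hXm2 : Measurable[m₂] X := measurable_const.indicator hB
  have hXint : Integrable X P := (integrable_const (1 : ℝ)).indicator hBm
  have hIX : ∫ ω, X ω ∂P = (P B).toReal := by
    exact integral_indicator_one (μ := P) hBm
  have hre : IndepFun X (fun ω => (g ω).re) P := by
    rw [IndepFun_iff_Indep]
    refine indep_of_indep_of_le_left (indep_of_indep_of_le_right hi.symm ?_) ?_
    · exact measurable_iff_comap_le.mp (Complex.measurable_re.comp hg)
    · exact measurable_iff_comap_le.mp hXm2
  have him : IndepFun X (fun ω => (g ω).im) P := by
    rw [IndepFun_iff_Indep]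
    refine indep_of_indep_of_le_left (indep_of_indep_of_le_right hi.symm ?_) ?_
    · exact measurable_iff_comap_le.mp (Complex.measurable_im.comp hg)
    · exact measurable_iff_comap_le.mp hXm2
  have hgre : Integrable (fun ω => (g ω).re) P := by simpa using hgint.re
  have hgim : Integrable (fun ω => (g ω).im) P := by simpa using hgint.im
  have key_re := IndepFun.integral_fun_mul_eq_mul_integral hre hXint.aestronglyMeasurable hgre.aestronglyMeasurable
  have key_im := IndepFun.integral_fun_mul_eq_mul_integral him hXint.aestronglyMeasurable hgim.aestronglyMeasurable
  have hptre : ∀ ω, (B.indicator g ω).re = X ω * (g ω).re := by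
    intro ω
    by_cases h : ω ∈ B <;> simp [hX, Set.indicator_of_mem, Set.indicator_of_notMem, h]
  have hptim : ∀ ω, (B.indicator g ω).im = X ω * (g ω).im := by
    intro ω
    by_cases h : ω ∈ B <;> simp [hX, Set.indicator_of_mem, Set.indicator_of_notMem, h]
  apply Complex.ext
  · have h1 : (∫ ω, B.indicator g ω ∂P).re = ∫ ω, (B.indicator g ω).re ∂P := by
      simpa using (integral_re hint).symm
    have h2 : (∫ ω, g ω ∂P).re = ∫ ω, (g ω).re ∂P := by
      simpa using (integral_re hgint).symm
    rw [Complex.smul_re, h1, h2]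
    calc ∫ ω, (B.indicator g ω).re ∂P = ∫ ω, X ω * (g ω).re ∂P :=
          integral_congr_ae (Eventually.of_forall hptre)
    _ = (∫ ω, X ω ∂P) * ∫ ω, (g ω).re ∂P := key_re
    _ = (P B).toReal * ∫ ω, (g ω).re ∂P := by rw [hIX]
  · have h1 : (∫ ω, B.indicator g ω ∂P).im = ∫ ω, (B.indicator g ω).im ∂P := by
      simpa using (integral_im hint).symm
    have h2 : (∫ ω, g ω ∂P).im = ∫ ω, (g ω).im ∂P := by
      simpa using (integral_im hgint).symm
    rw [Complex.smul_im, h1, h2]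
    calc ∫ ω, (B.indicator g ω).im ∂P = ∫ ω, X ω * (g ω).im ∂P :=
          integral_congr_ae (Eventually.of_forall hptim)
    _ = (∫ ω, X ω ∂P) * ∫ ω, (g ω).im ∂P := key_im
    _ = (P B).toReal * ∫ ω, (g ω).im ∂P := by rw [hIX]

/-- Conditioning on a countably-valued independent time. -/
lemma aux_key_nat {m₁ m₂ : MeasurableSpace Ω} (h₁ : m₁ ≤ mΩ) (h₂ : m₂ ≤ mΩ)
    (hi : Indep m₁ m₂ P)
    (F : ℝ≥0 → Ω → ℂ) (hFmeas : ∀ r, Measurable[m₁] (F r)) (hFbd : ∀ r ω, ‖F r ω‖ ≤ 1)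
    (N : Ω → ℕ) (hN : Measurable[m₂] N) (t : ℕ → ℝ≥0) :
    ∫ ω, F (t (N ω)) ω ∂P = ∫ ω, (∫ ω', F (t (N ω)) ω' ∂P) ∂P := by
  letI instΩ : MeasurableSpace Ω := mΩ
  set B : ℕ → Set Ω := fun k => N ⁻¹' {k} with hBdef
  have hBm2 : ∀ k, MeasurableSet[m₂] (B k) := fun k => hN (measurableSet_singleton k)
  have hBm : ∀ k, MeasurableSet[mΩ] (B k) := fun k => h₂ _ (hBm2 k)
  have hFm : ∀ r, Measurable[mΩ] (F r) := fun r => (hFmeas r).mono h₁ le_rfl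
  have hPB : (∑' k, P (B k)) = 1 := by
    have hdis : Pairwise (Function.onFun Disjoint B) := by
      simpa [hBdef] using pairwise_disjoint_fiber N
    have hU : (⋃ k, B k) = Set.univ := by ext ω; simp [hBdef]
    calc (∑' k, P (B k)) = P (⋃ k, B k) := (measure_iUnion hdis hBm).symm
    _ = 1 := by rw [hU, measure_univ]
  have hpt : ∀ (h : ℕ → Ω → ℂ) (ω : Ω), h (N ω) ω = ∑' k, (B k).indicator (h k) ω := by
    intro h ω
    rw [tsum_eq_single (N ω) ?_]
    · rw [Set.indicator_of_mem (by simp [hBdef])]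
    · intro k hk
      exact Set.indicator_of_notMem (by simp [hBdef, hk.symm]) _
  have hsum_ne_top : ∀ (h : ℕ → Ω → ℂ), (∀ k ω, ‖h k ω‖ ≤ 1) →
      (∑' k, ∫⁻ ω, ‖(B k).indicator (h k) ω‖₊ ∂P) ≠ ⊤ := by
    intro h hb
    have hlint : ∀ k, (∫⁻ ω, ‖(B k).indicator (h k) ω‖₊ ∂P) ≤ P (B k) := by
      intro k
      calc (∫⁻ ω, ‖(B k).indicator (h k) ω‖₊ ∂P)
          ≤ ∫⁻ ω, (B k).indicator (fun _ => 1) ω ∂P := by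
            apply lintegral_mono
            intro ω
            by_cases hω : ω ∈ B k
            · have h1 : ‖h k ω‖₊ ≤ 1 := by exact_mod_cast hb k ω
              simp only [Set.indicator_of_mem hω]
              exact_mod_cast h1
            · simp [Set.indicator_of_notMem hω]
      _ = P (B k) := lintegral_indicator_one (hBm k)
    have hle1 : (∑' k, ∫⁻ ω, ‖(B k).indicator (h k) ω‖₊ ∂P) ≤ 1 := by
      calc (∑' k, ∫⁻ ω, ‖(B k).indicator (h k) ω‖₊ ∂P) ≤ ∑' k, P (B k) :=
            ENNReal.tsum_le_tsum hlint
      _ = 1 := hPB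
    exact ne_top_of_le_ne_top (by simp) hle1
  set Φ : ℕ → ℂ := fun k => ∫ ω', F (t k) ω' ∂P with hΦdef
  have hΦbd : ∀ k, ‖Φ k‖ ≤ 1 := by
    intro k
    calc ‖Φ k‖ ≤ 1 * (P Set.univ).toReal :=
          norm_integral_le_of_norm_le_const (Eventually.of_forall fun ω => hFbd (t k) ω)
    _ = 1 := by simp
  have I1 : ∫ ω, F (t (N ω)) ω ∂P = ∑' k, (P (B k)).toReal • Φ k := by
    calc ∫ ω, F (t (N ω)) ω ∂P
        = ∫ ω, ∑' k, (B k).indicator (F (t k)) ω ∂P :=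
          integral_congr_ae (Eventually.of_forall fun ω => hpt (fun k => F (t k)) ω)
    _ = ∑' k, ∫ ω, (B k).indicator (F (t k)) ω ∂P :=
          integral_tsum (fun k => ((hFm (t k)).indicator (hBm k)).aestronglyMeasurable)
            (hsum_ne_top (fun k => F (t k)) (fun k ω => hFbd (t k) ω))
    _ = ∑' k, (P (B k)).toReal • Φ k := by
          refine tsum_congr fun k => ?_
          exact aux_indic h₁ h₂ hi (hBm2 k) (hFmeas (t k)) (fun ω => hFbd (t k) ω)
  have I2 : ∫ ω, (∫ ω', F (t (N ω)) ω' ∂P) ∂P = ∑' k, (P (B k)).toReal • Φ k := by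
    calc ∫ ω, (∫ ω', F (t (N ω)) ω' ∂P) ∂P
        = ∫ ω, ∑' k, (B k).indicator (fun _ => Φ k) ω ∂P :=
          integral_congr_ae (Eventually.of_forall fun ω => hpt (fun k _ => Φ k) ω)
    _ = ∑' k, ∫ ω, (B k).indicator (fun _ => Φ k) ω ∂P :=
          integral_tsum (fun k => (measurable_const.indicator (hBm k)).aestronglyMeasurable)
            (hsum_ne_top (fun k _ => Φ k) (fun k ω => hΦbd k))
    _ = ∑' k, (P (B k)).toReal • Φ k := by
          refine tsum_congr fun k => ?_
          exact integral_indicator_const (Φ k) (hBm k)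
  rw [I1, I2]

/-- Key lemma: freezing an independent time in a right-continuous process. -/
lemma aux_key
    (W : ℝ≥0 → Ω → ℝ) (hW : Measurable (Function.uncurry W))
    (hWrc : ∀ ω t, ContinuousWithinAt (fun s => W s ω) (Set.Ici t) t)
    {m𝓜 : MeasurableSpace Ω} (h𝓜 : m𝓜 ≤ mΩ)
    (hindep : Indep (⨆ s : ℝ≥0, MeasurableSpace.comap (W s) inferInstance) m𝓜 P)
    (T : Ω → ℝ≥0) (hT : Measurable[m𝓜] T)
    (f : ℝ → ℂ) (hfc : Continuous f) (hfb : ∀ x, ‖f x‖ ≤ 1) :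
    ∫ ω, f (W (T ω) ω) ∂P = ∫ ω, (∫ ω', f (W (T ω) ω') ∂P) ∂P := by
  letI instΩ : MeasurableSpace Ω := mΩ
  have hWs : ∀ s, Measurable[mΩ] (W s) := fun s => hW.comp measurable_prodMk_left
  have hsup_le : (⨆ s : ℝ≥0, MeasurableSpace.comap (W s) inferInstance) ≤ mΩ :=
    iSup_le fun s => measurable_iff_comap_le.mp (hWs s)
  have hTm : Measurable[mΩ] T := hT.mono h𝓜 le_rfl
  set Φ : ℝ≥0 → ℂ := fun r => ∫ ω', f (W r ω') ∂P with hΦdef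
  have hΦsm : StronglyMeasurable Φ := by
    have h : StronglyMeasurable fun p : ℝ≥0 × Ω => f (Function.uncurry W p) :=
      (hfc.measurable.comp hW).stronglyMeasurable
    exact h.integral_prod_right'
  have hΦbd : ∀ r, ‖Φ r‖ ≤ 1 := by
    intro r
    calc ‖Φ r‖ ≤ 1 * (P Set.univ).toReal :=
          norm_integral_le_of_norm_le_const (Eventually.of_forall fun ω => hfb _)
    _ = 1 := by simp
  set D : ℕ → Ω → ℝ≥0 := fun n ω => ((⌈(2 ^ n : ℝ≥0) * T ω⌉₊ : ℝ≥0) / 2 ^ n) with hDdef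
  have hDlim : ∀ ω, Tendsto (fun n => D n ω) atTop (nhdsWithin (T ω) (Set.Ici (T ω))) :=
    fun ω => aux_dyadic_tendsto (T ω)
  have hDm : ∀ n, Measurable[mΩ] (D n) := by
    intro n
    have hrw : D n = (fun k : ℕ => (k : ℝ≥0) / 2 ^ n) ∘ fun ω => ⌈(2 ^ n : ℝ≥0) * T ω⌉₊ := rfl
    rw [hrw]
    exact measurable_from_nat.comp ((measurable_const.mul hTm).nat_ceil)
  have hWlim : ∀ (ω ω' : Ω), Tendsto (fun n => W (D n ω) ω') atTop (nhds (W (T ω) ω')) :=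
    fun ω ω' => (hWrc ω' (T ω)).tendsto.comp (hDlim ω)
  have heq : ∀ n : ℕ, ∫ ω, f (W (D n ω) ω) ∂P = ∫ ω, Φ (D n ω) ∂P := by
    intro n
    have hNn : Measurable[m𝓜] fun ω => ⌈(2 ^ n : ℝ≥0) * T ω⌉₊ := by
      letI : MeasurableSpace Ω := m𝓜
      exact Measurable.nat_ceil (hT.const_mul _)
    exact aux_key_nat (P := P) hsup_le h𝓜 hindep
      (fun r ω => f (W r ω))
      (fun r => hfc.measurable.comp
        (measurable_iff_comap_le.mpr
          (le_iSup (fun s => MeasurableSpace.comap (W s) inferInstance) r)))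
      (fun r ω => hfb _)
      (fun ω => ⌈(2 ^ n : ℝ≥0) * T ω⌉₊) hNn
      (fun k => (k : ℝ≥0) / 2 ^ n)
  have hleft : Tendsto (fun n => ∫ ω, f (W (D n ω) ω) ∂P) atTop
      (nhds (∫ ω, f (W (T ω) ω) ∂P)) := by
    apply tendsto_integral_of_dominated_convergence (bound := fun _ => (1 : ℝ))
    · intro n
      exact (hfc.measurable.comp (hW.comp ((hDm n).prodMk measurable_id))).aestronglyMeasurable
    · exact integrable_const 1
    · exact fun n => Eventually.of_forall fun ω => hfb _
    · exact Eventually.of_forall fun ω => (hfc.tendsto _).comp (hWlim ω ω)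
  have hright : Tendsto (fun n => ∫ ω, Φ (D n ω) ∂P) atTop
      (nhds (∫ ω, Φ (T ω) ∂P)) := by
    apply tendsto_integral_of_dominated_convergence (bound := fun _ => (1 : ℝ))
    · exact fun n => (hΦsm.measurable.comp (hDm n)).aestronglyMeasurable
    · exact integrable_const 1
    · exact fun n => Eventually.of_forall fun ω => hΦbd _
    · refine Eventually.of_forall fun ω => ?_
      apply tendsto_integral_of_dominated_convergence (bound := fun _ => (1 : ℝ))
      · intro n
        exact (hfc.measurable.comp (hWs (D n ω))).aestronglyMeasurable
      · exact integrable_const 1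
      · exact fun n => Eventually.of_forall fun ω' => hfb _
      · exact Eventually.of_forall fun ω' => (hfc.tendsto _).comp (hWlim ω ω')
  have h2 : Tendsto (fun n => ∫ ω, f (W (D n ω) ω) ∂P) atTop (nhds (∫ ω, Φ (T ω) ∂P)) := by
    simpa only [heq] using hright
  exact tendsto_nhds_unique hleft h2

end Aux

/-- Theorem 3.2(ii) in the independent case: if the base process `L`, the first time change
`U` and the second time change `V` are jointly independent and `E[exp(i m L_s)] = exp(s ψ)`,
then the characteristic function of the composite time-changed process `X = L_{U_V}` equals
the expectation over `V` of the generalized Laplace transform of `U`: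
`φ_X(m; t) = E[φ_U(−iΨ_L(m); V_t)]`. -/
theorem charFun_composite_time_changed_levy_independent
    {Ω : Type*} [MeasurableSpace Ω] (P : Measure Ω) [IsProbabilityMeasure P]
    (L : ℝ≥0 → Ω → ℝ) (U : ℝ≥0 → Ω → ℝ≥0) (V : Ω → ℝ≥0)
    (hLmeas : Measurable (Function.uncurry L))
    (hUmeas : Measurable (Function.uncurry U))
    (hVmeas : Measurable V)
    (hLrc : ∀ (ω : Ω) (t : ℝ≥0), ContinuousWithinAt (fun s => L s ω) (Set.Ici t) t)
    (hUrc : ∀ (ω : Ω) (t : ℝ≥0), ContinuousWithinAt (fun s => U s ω) (Set.Ici t) t)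
    (m : ℝ) (ψ : ℂ)
    (hchar : ∀ s : ℝ≥0,
      ∫ ω, Complex.exp (I * m * L s ω) ∂P = Complex.exp ((s : ℝ) * ψ))
    (hindep : iIndep
      ![⨆ s : ℝ≥0, MeasurableSpace.comap (L s) inferInstance,
        ⨆ s : ℝ≥0, MeasurableSpace.comap (U s) inferInstance,
        MeasurableSpace.comap V inferInstance] P)
    (g : ℝ≥0 → ℂ)
    (hg : ∀ r : ℝ≥0, g r = ∫ ω, Complex.exp (ψ * ((U r ω : ℝ) : ℂ)) ∂P) :
    ∫ ω, Complex.exp (I * m * L (U (V ω) ω) ω) ∂P = ∫ ω, g (V ω) ∂P := by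
  letI mΩ : MeasurableSpace Ω := inferInstance
  have hLs : ∀ s, Measurable[mΩ] (L s) := fun s => hLmeas.comp measurable_prodMk_left
  have hUs : ∀ s, Measurable[mΩ] (U s) := fun s => hUmeas.comp measurable_prodMk_left
  have hLle : (⨆ s : ℝ≥0, MeasurableSpace.comap (L s) inferInstance) ≤ mΩ :=
    iSup_le fun s => measurable_iff_comap_le.mp (hLs s)
  have hUle : (⨆ s : ℝ≥0, MeasurableSpace.comap (U s) inferInstance) ≤ mΩ :=
    iSup_le fun s => measurable_iff_comap_le.mp (hUs s)
  have hVle : MeasurableSpace.comap V inferInstance ≤ mΩ := measurable_iff_comap_le.mp hVmeas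
  have h𝓜le : (⨆ s : ℝ≥0, MeasurableSpace.comap (U s) inferInstance) ⊔
      MeasurableSpace.comap V inferInstance ≤ mΩ := sup_le hUle hVle
  have h_le : ∀ i, (![⨆ s : ℝ≥0, MeasurableSpace.comap (L s) inferInstance,
        ⨆ s : ℝ≥0, MeasurableSpace.comap (U s) inferInstance,
        MeasurableSpace.comap V inferInstance] : Fin 3 → MeasurableSpace Ω) i ≤ mΩ := by
    intro i; fin_cases i
    · exact hLle
    · exact hUle
    · exact hVle
  have hIndepL : Indep (⨆ s : ℝ≥0, MeasurableSpace.comap (L s) inferInstance)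
      ((⨆ s : ℝ≥0, MeasurableSpace.comap (U s) inferInstance) ⊔
        MeasurableSpace.comap V inferInstance) P := by
    have h := indep_iSup_of_disjoint h_le hindep (S := {0}) (T := {1, 2}) (by simp)
    rw [iSup_singleton, iSup_insert, iSup_singleton] at h
    simpa using h
  have hIndepUV : Indep (⨆ s : ℝ≥0, MeasurableSpace.comap (U s) inferInstance)
      (MeasurableSpace.comap V inferInstance) P := by
    have h := hindep.indep (i := 1) (j := 2) (by decide)
    simpa using h
  -- measurability of the composite time with respect to σ(U) ⊔ σ(V)
  have hTmeas : Measurable[(⨆ s : ℝ≥0, MeasurableSpace.comap (U s) inferInstance) ⊔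
      MeasurableSpace.comap V inferInstance] (fun ω => U (V ω) ω) := by
    set m𝓜 := (⨆ s : ℝ≥0, MeasurableSpace.comap (U s) inferInstance) ⊔
      MeasurableSpace.comap V inferInstance with hm𝓜
    have hV𝓜 : Measurable[m𝓜] V := measurable_iff_comap_le.mpr (by rw [hm𝓜]; exact le_sup_right)
    have hU𝓜 : ∀ r, Measurable[m𝓜] (U r) := fun r =>
      measurable_iff_comap_le.mpr (by
        rw [hm𝓜]
        exact le_trans (le_iSup (fun s => MeasurableSpace.comap (U s) inferInstance) r) le_sup_left)
    have hFn : ∀ n : ℕ, Measurable[m𝓜]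
        (fun ω => U ((⌈(2 ^ n : ℝ≥0) * V ω⌉₊ : ℝ≥0) / 2 ^ n) ω) := by
      intro n
      letI : MeasurableSpace Ω := m𝓜
      have hpair : Measurable fun ω => ((ω, ⌈(2 ^ n : ℝ≥0) * V ω⌉₊) : Ω × ℕ) :=
        measurable_id.prodMk ((hV𝓜.const_mul _).nat_ceil)
      exact (measurable_from_prod_countable_left
        (f := fun p : Ω × ℕ => U ((p.2 : ℝ≥0) / 2 ^ n) p.1)
        (fun k : ℕ => hU𝓜 ((k : ℝ≥0) / 2 ^ n))).comp hpair
    apply measurable_of_tendsto_metrizable hFn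
    rw [tendsto_pi_nhds]
    intro ω
    exact (hUrc ω (V ω)).tendsto.comp (aux_dyadic_tendsto (V ω))
  -- Re ψ ≤ 0
  have hnorm1 : ∀ (s : ℝ≥0) (ω : Ω), ‖Complex.exp (I * m * L s ω)‖ = 1 := by
    intro s ω
    rw [Complex.norm_exp]
    norm_num [Complex.mul_re, Complex.mul_im]
  have hψ : ψ.re ≤ 0 := by
    have h1 := hchar 1
    have h2 : ‖∫ ω, Complex.exp (I * m * L 1 ω) ∂P‖ ≤ 1 := by
      calc ‖∫ ω, Complex.exp (I * m * L 1 ω) ∂P‖ ≤ 1 * (P Set.univ).toReal :=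
            norm_integral_le_of_norm_le_const
              (Eventually.of_forall fun ω => le_of_eq (hnorm1 1 ω))
      _ = 1 := by simp
    rw [h1, Complex.norm_exp] at h2
    have h3 : Real.exp ψ.re ≤ 1 := by simpa using h2
    exact Real.exp_le_one_iff.mp h3
  -- step 1 : freeze the composite time in L
  have hf₁c : Continuous fun x : ℝ => Complex.exp (I * m * x) :=
    Complex.continuous_exp.comp (continuous_const.mul Complex.continuous_ofReal)
  have hf₁b : ∀ x : ℝ, ‖Complex.exp (I * m * x)‖ ≤ 1 := by
    intro x
    rw [Complex.norm_exp]
    norm_num [Complex.mul_re, Complex.mul_im]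
  have step1 := aux_key (P := P) L hLmeas hLrc h𝓜le hIndepL (fun ω => U (V ω) ω) hTmeas
    (fun x : ℝ => Complex.exp (I * m * x)) hf₁c hf₁b
  -- step 2 : freeze V in the (real-valued) process U
  have hW₂ : Measurable (Function.uncurry fun (s : ℝ≥0) (ω : Ω) => (U s ω : ℝ)) :=
    measurable_coe_nnreal_real.comp hUmeas
  have hW₂rc : ∀ (ω : Ω) (t : ℝ≥0),
      ContinuousWithinAt (fun s => ((fun (s : ℝ≥0) (ω : Ω) => (U s ω : ℝ)) s ω)) (Set.Ici t) t :=
    fun ω t => (NNReal.continuous_coe.continuousAt).comp_continuousWithinAt (hUrc ω t)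
  have hsup₂ : (⨆ s : ℝ≥0,
        MeasurableSpace.comap ((fun (s : ℝ≥0) (ω : Ω) => (U s ω : ℝ)) s) inferInstance)
      ≤ ⨆ s : ℝ≥0, MeasurableSpace.comap (U s) inferInstance := by
    refine iSup_mono fun s => ?_
    have h1 : MeasurableSpace.comap (((↑) : ℝ≥0 → ℝ) ∘ U s) inferInstance
        ≤ MeasurableSpace.comap (U s) inferInstance := by
      rw [← MeasurableSpace.comap_comp]
      exact MeasurableSpace.comap_mono (measurable_iff_comap_le.mp measurable_coe_nnreal_real)
    exact h1
  have hIndep₂ : Indep (⨆ s : ℝ≥0,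
        MeasurableSpace.comap ((fun (s : ℝ≥0) (ω : Ω) => (U s ω : ℝ)) s) inferInstance)
      (MeasurableSpace.comap V inferInstance) P :=
    indep_of_indep_of_le_left hIndepUV hsup₂
  have hf₂c : Continuous fun x : ℝ => Complex.exp (ψ * ((x ⊔ 0 : ℝ) : ℝ)) :=
    Complex.continuous_exp.comp (continuous_const.mul
      (Complex.continuous_ofReal.comp (continuous_id.max continuous_const)))
  have hf₂b : ∀ x : ℝ, ‖Complex.exp (ψ * ((x ⊔ 0 : ℝ) : ℝ))‖ ≤ 1 := by
    intro x
    rw [Complex.norm_exp]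
    rw [Real.exp_le_one_iff]
    have : (ψ * (((x ⊔ 0 : ℝ) : ℝ) : ℂ)).re = ψ.re * max x 0 := by
      simp [Complex.mul_re]
    rw [this]
    exact mul_nonpos_iff.mpr (Or.inr ⟨hψ, le_sup_right⟩)
  have step2 := aux_key (P := P) (fun (s : ℝ≥0) (ω : Ω) => (U s ω : ℝ)) hW₂ hW₂rc hVle hIndep₂
    V (measurable_iff_comap_le.mpr le_rfl)
    (fun x : ℝ => Complex.exp (ψ * ((x ⊔ 0 : ℝ) : ℝ))) hf₂c hf₂b
  -- assemble
  calc ∫ ω, Complex.exp (I * m * L (U (V ω) ω) ω) ∂P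
      = ∫ ω, (∫ ω', Complex.exp (I * m * L (U (V ω) ω) ω') ∂P) ∂P := by exact step1
  _ = ∫ ω, Complex.exp (((U (V ω) ω : ℝ) : ℂ) * ψ) ∂P :=
      integral_congr_ae (Eventually.of_forall fun ω => hchar (U (V ω) ω))
  _ = ∫ ω, Complex.exp (ψ * (((U (V ω) ω : ℝ) ⊔ 0 : ℝ) : ℂ)) ∂P := by
      refine integral_congr_ae (Eventually.of_forall fun ω => ?_)
      beta_reduce
      rw [show ((U (V ω) ω : ℝ) ⊔ 0 : ℝ) = ((U (V ω) ω : ℝ)) from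
        sup_eq_left.mpr (U (V ω) ω).coe_nonneg, mul_comm]
  _ = ∫ ω, (∫ ω', Complex.exp (ψ * (((U (V ω) ω' : ℝ) ⊔ 0 : ℝ) : ℂ)) ∂P) ∂P := by exact step2
  _ = ∫ ω, g (V ω) ∂P := by
      refine integral_congr_ae (Eventually.of_forall fun ω => ?_)
      beta_reduce
      rw [hg (V ω)]
      refine integral_congr_ae (Eventually.of_forall fun ω' => ?_)
      beta_reduce
      rw [show ((U (V ω) ω' : ℝ) ⊔ 0 : ℝ) = ((U (V ω) ω' : ℝ)) from
        sup_eq_left.mpr (U (V ω) ω').coe_nonneg]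
end
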